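/- Let (G,P,Δ) be a Garside group of finite type and let v, w be two vertices of the additional length complex C_AL(G) with d_AL(v,w) = 1. Then the diameter in C_AL(G) of the preferred path A(v,w) is equal to 1, i.e., any two distinct vertices visited by A(v,w) are at d_AL-distance exactly 1. -/

import Mathlib

/-- A Garside group of finite type: a group `G` (the group of fractions of its positive
monoid `P`), with a Garside element `Δ`, together with the associated data (left gcds,
infimum, supremum, distinguished coset representatives) satisfying the Garside axioms.
Here `u ≼ v` (prefix order) is encoded by `u⁻¹ * v ∈ P` and `u` being a suffix of `v`
by `v * u⁻¹ ∈ P`. -/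
structure GarsideGroup (G : Type*) [Group G] where
  /-- the positive monoid, viewed inside its group of fractions -/
  P : Submonoid G
  /-- the Garside element -/
  Δ : G
  delta_pos : Δ ∈ P
  /-- `G` is the group of fractions of `P` -/
  fractions : ∀ x : G, ∃ p ∈ P, ∃ q ∈ P, x = p⁻¹ * q
  /-- atomicity: the lengths of decompositions of a positive element into nontrivial
  positive factors are bounded -/
  atomic : ∀ p ∈ P, ∃ N : ℕ,
    ∀ l : List G, (∀ a ∈ l, a ∈ P ∧ a ≠ 1) → l.prod = p → l.length ≤ N
  /-- left gcds for the prefix order -/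
  lgcd : G → G → G
  lgcd_dvd_left : ∀ a b : G, (lgcd a b)⁻¹ * a ∈ P
  lgcd_dvd_right : ∀ a b : G, (lgcd a b)⁻¹ * b ∈ P
  lgcd_greatest : ∀ a b c : G, c⁻¹ * a ∈ P → c⁻¹ * b ∈ P → c⁻¹ * lgcd a b ∈ P
  /-- left lcms exist -/
  llcm_exists : ∀ a b : G, ∃ m : G, a⁻¹ * m ∈ P ∧ b⁻¹ * m ∈ P ∧
    ∀ c : G, a⁻¹ * c ∈ P → b⁻¹ * c ∈ P → m⁻¹ * c ∈ P
  /-- right gcds exist -/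
  rgcd_exists : ∀ a b : G, ∃ d : G, a * d⁻¹ ∈ P ∧ b * d⁻¹ ∈ P ∧
    ∀ c : G, a * c⁻¹ ∈ P → b * c⁻¹ ∈ P → d * c⁻¹ ∈ P
  /-- right lcms exist -/
  rlcm_exists : ∀ a b : G, ∃ m : G, m * a⁻¹ ∈ P ∧ m * b⁻¹ ∈ P ∧
    ∀ c : G, c * a⁻¹ ∈ P → c * b⁻¹ ∈ P → c * m⁻¹ ∈ P
  /-- the left divisors of `Δ` coincide with its right divisors (the simple elements) -/
  simples_symm : ∀ s : G, (s ∈ P ∧ s⁻¹ * Δ ∈ P) ↔ (s ∈ P ∧ Δ * s⁻¹ ∈ P)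
  /-- finite type: there are only finitely many simple elements -/
  simples_finite : {s : G | s ∈ P ∧ s⁻¹ * Δ ∈ P}.Finite
  /-- the simple elements generate `P` -/
  simples_generate : ∀ p ∈ P, p ∈ Submonoid.closure {s : G | s ∈ P ∧ s⁻¹ * Δ ∈ P}
  /-- the infimum: `ginf x = max { r : ℤ | Δ^r ≼ x }` -/
  ginf : G → ℤ
  ginf_dvd : ∀ x : G, (Δ ^ ginf x)⁻¹ * x ∈ P
  ginf_max : ∀ (x : G) (r : ℤ), (Δ ^ r)⁻¹ * x ∈ P → r ≤ ginf x
  /-- the supremum: `gsup x = min { s : ℤ | x ≼ Δ^s }` -/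
  gsup : G → ℤ
  gsup_dvd : ∀ x : G, x⁻¹ * Δ ^ gsup x ∈ P
  gsup_min : ∀ (x : G) (s : ℤ), x⁻¹ * Δ ^ s ∈ P → gsup x ≤ s
  /-- each coset `gΔ^ℤ` has a unique distinguished representative, of infimum `0` -/
  rep : G ⧸ Subgroup.zpowers Δ → G
  rep_mem : ∀ v : G ⧸ Subgroup.zpowers Δ,
    (QuotientGroup.mk (rep v) : G ⧸ Subgroup.zpowers Δ) = v
  rep_inf : ∀ v : G ⧸ Subgroup.zpowers Δ, ginf (rep v) = 0
  rep_eq : ∀ x : G, ginf x = 0 → rep (QuotientGroup.mk x) = x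

namespace GarsideGroup

variable {G : Type*} [Group G]

/-- the prefix order: `u ≼ v` -/
def LDvd (g : GarsideGroup G) (u v : G) : Prop := u⁻¹ * v ∈ g.P

/-- the suffix order: `u` is a suffix of `v` -/
def RDvd (g : GarsideGroup G) (u v : G) : Prop := v * u⁻¹ ∈ g.P

/-- simple elements: positive left divisors of `Δ` -/
def Simple (g : GarsideGroup G) (s : G) : Prop := s ∈ g.P ∧ g.LDvd s g.Δ

/-- atoms of the positive monoid -/
def Atom (g : GarsideGroup G) (a : G) : Prop :=
  a ∈ g.P ∧ a ≠ 1 ∧ ∀ u v : G, u ∈ g.P → v ∈ g.P → a = u * v → u = 1 ∨ v = 1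

/-- the canonical length `ℓ(x) = sup(x) - inf(x)` -/
def ell (g : GarsideGroup G) (x : G) : ℤ := g.gsup x - g.ginf x

/-- the (powers of the) inner automorphism `τ(x) = Δ⁻¹ x Δ`: `tau k x = Δ^{-k} x Δ^k` -/
def tau (g : GarsideGroup G) (k : ℤ) (x : G) : G := g.Δ ^ (-k) * x * g.Δ ^ k

/-- the right complement `∂y = y⁻¹ Δ^{sup y}` -/
def comp (g : GarsideGroup G) (y : G) : G := y⁻¹ * g.Δ ^ g.gsup y

/-- `x` absorbs `y` -/
def Absorbs (g : GarsideGroup G) (x y : G) : Prop :=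
  g.ginf (x * y) = g.ginf x ∧ g.gsup (x * y) = g.gsup x

/-- absorbable elements -/
def Absorbable (g : GarsideGroup G) (y : G) : Prop :=
  (g.ginf y = 0 ∨ g.gsup y = 0) ∧ ∃ x : G, g.Absorbs x y

end GarsideGroup
namespace GarsideGroup

variable {G : Type*} [Group G]

/-- the vertex set of the additional length complex: cosets `gΔ^ℤ` -/
abbrev Vertex (g : GarsideGroup G) : Type _ := G ⧸ Subgroup.zpowers g.Δ

/-- the vertex represented by a group element -/
def vtx (g : GarsideGroup G) (a : G) : Vertex g := QuotientGroup.mk a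

/-- there is an edge from `v` to `w` labelled by a non-trivial, non-`Δ` simple element,
or by an absorbable element -/
def Step (g : GarsideGroup G) (v w : Vertex g) : Prop :=
  (∃ m : G, g.Simple m ∧ m ≠ 1 ∧ m ≠ g.Δ ∧ g.vtx (g.rep v * m) = w) ∨
  (∃ y : G, g.Absorbable y ∧ g.vtx (g.rep v * y) = w)

/-- the additional length complex `C_AL(G)`, as a graph on `G/⟨Δ⟩` -/
def calGraph (g : GarsideGroup G) : SimpleGraph (Vertex g) where
  Adj v w := v ≠ w ∧ (g.Step v w ∨ g.Step w v)
  symm := ⟨fun _ _ h => ⟨h.1.symm, h.2.symm⟩⟩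
  loopless := ⟨fun _ h => h.1 rfl⟩

/-- the additional length metric `d_AL`: the graph distance on `C_AL(G)` (each edge
having length `1`) -/
noncomputable def dAL (g : GarsideGroup G) (v w : Vertex g) : ℕ := (g.calGraph).dist v w

/-- `l` is a left normal form (of the element `l.prod`, of infimum `0`): all factors are
simple, different from `1` and `Δ`, and each consecutive pair is left-weighted, i.e.
`l[i] = Δ ∧ (l[i] ⋯ l[r])` for all `i`. -/
def IsLNF (g : GarsideGroup G) (l : List G) : Prop :=
  (∀ s ∈ l, g.Simple s ∧ s ≠ 1 ∧ s ≠ g.Δ) ∧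
  ∀ (i : ℕ) (h : i < l.length), ∀ c : G,
    g.LDvd c g.Δ → g.LDvd c (l.drop i).prod → g.LDvd c (l.get ⟨i, h⟩)

/-- `l` is a right normal form: all factors are simple, different from `1` and `Δ`, and
`l[i] = (l[0] ⋯ l[i]) ∧↰ Δ` (right gcd) for all `i`. -/
def IsRNF (g : GarsideGroup G) (l : List G) : Prop :=
  (∀ s ∈ l, g.Simple s ∧ s ≠ 1 ∧ s ≠ g.Δ) ∧
  ∀ (i : ℕ) (h : i < l.length), ∀ c : G,
    g.RDvd c g.Δ → g.RDvd c (l.take (i + 1)).prod → g.RDvd c (l.get ⟨i, h⟩)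

/-- the distinguished representative of the coset `(v̄⁻¹w̄)Δ^ℤ` -/
def relRep (g : GarsideGroup G) (v w : Vertex g) : G :=
  g.rep (g.vtx ((g.rep v)⁻¹ * g.rep w))

/-- the vertices visited by the edge-path starting at `v` whose edges are labelled by
the entries of `l` -/
def pathVertices (g : GarsideGroup G) (v : Vertex g) (l : List G) : List (Vertex g) :=
  (List.range (l.length + 1)).map fun i => g.vtx (g.rep v * (l.take i).prod)

/-- `l` is the list of labels of the preferred path `A(v,w)`: the left normal form of the
distinguished representative of `(v̄⁻¹w̄)Δ^ℤ`.  The vertices visited by `A(v,w)` are then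
`g.pathVertices v l`. -/
def IsPrefPath (g : GarsideGroup G) (v w : Vertex g) (l : List G) : Prop :=
  g.IsLNF l ∧ l.prod = g.relRep v w

end GarsideGroup

namespace GarsideGroup

variable {G : Type*} [Group G] (g : GarsideGroup G)

/-! ### Basic auxiliary lemmas -/

lemma aux_eq_one {a : G} (ha : a ∈ g.P) (hi : a⁻¹ ∈ g.P) : a = 1 := by
  by_contra hne
  obtain ⟨N, hN⟩ := g.atomic a ha
  have hlen := hN (List.replicate N a⁻¹ ++ List.replicate (N + 1) a) ?_ ?_
  · simp only [List.length_append, List.length_replicate] at hlen; omega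
  · intro b hb
    rcases List.mem_append.1 hb with h | h <;> rw [List.eq_of_mem_replicate h]
    · exact ⟨hi, by simp [hne]⟩
    · exact ⟨ha, hne⟩
  · rw [List.prod_append, List.prod_replicate, List.prod_replicate, inv_pow]
    group

lemma aux_conj_mem {p : G} (hp : p ∈ g.P) : g.Δ⁻¹ * p * g.Δ ∈ g.P := by
  have key : ∀ q : G, q ∈ Submonoid.closure {s : G | s ∈ g.P ∧ s⁻¹ * g.Δ ∈ g.P} →
      g.Δ⁻¹ * q * g.Δ ∈ g.P := by
    intro q hq
    induction hq using Submonoid.closure_induction with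
    | mem s hs =>
        obtain ⟨hsP, hsd⟩ := hs
        have h2 : g.Δ * (s⁻¹ * g.Δ)⁻¹ ∈ g.P := by
          have e : g.Δ * (s⁻¹ * g.Δ)⁻¹ = s := by group
          rw [e]; exact hsP
        have h3 := ((g.simples_symm (s⁻¹ * g.Δ)).mpr ⟨hsd, h2⟩).2
        have e : (s⁻¹ * g.Δ)⁻¹ * g.Δ = g.Δ⁻¹ * s * g.Δ := by group
        rwa [e] at h3
    | one => simpa using g.P.one_mem
    | mul x y hx hy ihx ihy =>
        have e : g.Δ⁻¹ * (x * y) * g.Δ = (g.Δ⁻¹ * x * g.Δ) * (g.Δ⁻¹ * y * g.Δ) := by group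
        rw [e]; exact g.P.mul_mem ihx ihy
  exact key p (g.simples_generate p hp)

lemma aux_conj_mem' {p : G} (hp : p ∈ g.P) : g.Δ * p * g.Δ⁻¹ ∈ g.P := by
  have key : ∀ q : G, q ∈ Submonoid.closure {s : G | s ∈ g.P ∧ s⁻¹ * g.Δ ∈ g.P} →
      g.Δ * q * g.Δ⁻¹ ∈ g.P := by
    intro q hq
    induction hq using Submonoid.closure_induction with
    | mem s hs =>
        obtain ⟨hsP, hsd⟩ := hs
        have h1 : g.Δ * s⁻¹ ∈ g.P := ((g.simples_symm s).mp ⟨hsP, hsd⟩).2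
        have h2 : (g.Δ * s⁻¹)⁻¹ * g.Δ ∈ g.P := by
          have e : (g.Δ * s⁻¹)⁻¹ * g.Δ = s := by group
          rw [e]; exact hsP
        have h3 := ((g.simples_symm (g.Δ * s⁻¹)).mp ⟨h1, h2⟩).2
        have e : g.Δ * (g.Δ * s⁻¹)⁻¹ = g.Δ * s * g.Δ⁻¹ := by group
        rwa [e] at h3
    | one => simpa using g.P.one_mem
    | mul x y hx hy ihx ihy =>
        have e : g.Δ * (x * y) * g.Δ⁻¹ = (g.Δ * x * g.Δ⁻¹) * (g.Δ * y * g.Δ⁻¹) := by group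
        rw [e]; exact g.P.mul_mem ihx ihy
  exact key p (g.simples_generate p hp)

lemma aux_zconj (k : ℤ) {p : G} (hp : p ∈ g.P) : g.Δ ^ k * p * g.Δ ^ (-k) ∈ g.P := by
  induction k using Int.induction_on with
  | zero => simpa using hp
  | succ n ih =>
      have e : g.Δ ^ ((n : ℤ) + 1) * p * g.Δ ^ (-((n : ℤ) + 1)) =
          g.Δ * (g.Δ ^ (n : ℤ) * p * g.Δ ^ (-(n : ℤ))) * g.Δ⁻¹ := by group
      rw [e]; exact g.aux_conj_mem' ih
  | pred n ih =>
      have e : g.Δ ^ (-(n : ℤ) - 1) * p * g.Δ ^ (-(-(n : ℤ) - 1)) =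
          g.Δ⁻¹ * (g.Δ ^ (-(n : ℤ)) * p * g.Δ ^ (-(-(n : ℤ)))) * g.Δ := by group
      rw [e]; exact g.aux_conj_mem ih

lemma aux_zconj' (k : ℤ) {p : G} (hp : g.Δ ^ k * p * g.Δ ^ (-k) ∈ g.P) : p ∈ g.P := by
  have h2 := g.aux_zconj (-k) hp
  have e : g.Δ ^ (-k) * (g.Δ ^ k * p * g.Δ ^ (-k)) * g.Δ ^ (-(-k)) = p := by group
  rwa [e] at h2

lemma aux_sandwich {c : G} {k : ℤ} (h : c⁻¹ * g.Δ ^ k ∈ g.P) (s : ℤ) :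
    g.Δ ^ s * c⁻¹ * g.Δ ^ (k - s) ∈ g.P := by
  have h2 := g.aux_zconj s h
  have e : g.Δ ^ s * (c⁻¹ * g.Δ ^ k) * g.Δ ^ (-s) = g.Δ ^ s * c⁻¹ * g.Δ ^ (k - s) := by group
  rwa [e] at h2

lemma aux_zpow_mem {k : ℤ} (hk : 0 ≤ k) : g.Δ ^ k ∈ g.P := by
  obtain ⟨n, rfl⟩ := Int.eq_ofNat_of_zero_le hk
  rw [zpow_natCast]
  exact pow_mem g.delta_pos n

lemma aux_delta_inv_not_mem : g.Δ⁻¹ ∉ g.P := by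
  intro h
  have hall : ∀ k : ℤ, g.Δ ^ k ∈ g.P := by
    intro k
    rcases le_or_gt 0 k with hk | hk
    · exact g.aux_zpow_mem hk
    · have e : g.Δ ^ k = g.Δ⁻¹ ^ ((-k).toNat) := by
        rw [← zpow_natCast, Int.toNat_of_nonneg (by omega), inv_zpow, zpow_neg, inv_inv]
      rw [e]; exact pow_mem h _
  have h1 := g.ginf_max 1 (g.ginf 1 + 1) (by rw [mul_one, ← zpow_neg]; exact hall _)
  omega

lemma aux_zpow_nonneg {k : ℤ} (hk : g.Δ ^ k ∈ g.P) : 0 ≤ k := by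
  by_contra h
  have e : g.Δ⁻¹ = g.Δ ^ k * g.Δ ^ (-k - 1) := by
    have e2 : k + (-k - 1) = -1 := by ring
    rw [← zpow_add, e2, zpow_neg_one]
  exact g.aux_delta_inv_not_mem (e ▸ mul_mem hk (g.aux_zpow_mem (by omega)))

/-! ### ginf and gsup -/

lemma aux_ginf_zpow_mul (k : ℤ) (x : G) : g.ginf (g.Δ ^ k * x) = k + g.ginf x := by
  apply le_antisymm
  · have h := g.ginf_dvd (g.Δ ^ k * x)
    have e : (g.Δ ^ g.ginf (g.Δ ^ k * x))⁻¹ * (g.Δ ^ k * x) =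
        (g.Δ ^ (g.ginf (g.Δ ^ k * x) - k))⁻¹ * x := by group
    rw [e] at h
    have := g.ginf_max x _ h
    omega
  · apply g.ginf_max
    have h := g.ginf_dvd x
    have e : (g.Δ ^ (k + g.ginf x))⁻¹ * (g.Δ ^ k * x) = (g.Δ ^ g.ginf x)⁻¹ * x := by group
    rw [e]; exact h

lemma aux_ginf_mul_zpow (x : G) (k : ℤ) : g.ginf (x * g.Δ ^ k) = g.ginf x + k := by
  apply le_antisymm
  · have h := g.aux_zconj k (g.ginf_dvd (x * g.Δ ^ k))
    have e : g.Δ ^ k * ((g.Δ ^ g.ginf (x * g.Δ ^ k))⁻¹ * (x * g.Δ ^ k)) * g.Δ ^ (-k) =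
        (g.Δ ^ (g.ginf (x * g.Δ ^ k) - k))⁻¹ * x := by group
    rw [e] at h
    have := g.ginf_max x _ h
    omega
  · apply g.ginf_max
    have h := g.aux_zconj (-k) (g.ginf_dvd x)
    have e : g.Δ ^ (-k) * ((g.Δ ^ g.ginf x)⁻¹ * x) * g.Δ ^ (-(-k)) =
        (g.Δ ^ (g.ginf x + k))⁻¹ * (x * g.Δ ^ k) := by group
    rw [e] at h; exact h

lemma aux_gsup_zpow_mul (k : ℤ) (x : G) : g.gsup (g.Δ ^ k * x) = k + g.gsup x := by
  apply le_antisymm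
  · apply g.gsup_min
    have e : (g.Δ ^ k * x)⁻¹ * g.Δ ^ (k + g.gsup x) = x⁻¹ * g.Δ ^ g.gsup x := by group
    rw [e]; exact g.gsup_dvd x
  · have h := g.gsup_dvd (g.Δ ^ k * x)
    have e : (g.Δ ^ k * x)⁻¹ * g.Δ ^ g.gsup (g.Δ ^ k * x) =
        x⁻¹ * g.Δ ^ (g.gsup (g.Δ ^ k * x) - k) := by group
    rw [e] at h
    have := g.gsup_min x _ h
    omega

lemma aux_gsup_mul_zpow (x : G) (k : ℤ) : g.gsup (x * g.Δ ^ k) = g.gsup x + k := by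
  apply le_antisymm
  · apply g.gsup_min
    have h := g.gsup_dvd x
    have e : (x * g.Δ ^ k)⁻¹ * g.Δ ^ (g.gsup x + k) =
        g.Δ ^ (-k) * (x⁻¹ * g.Δ ^ g.gsup x) * g.Δ ^ (-(-k)) := by group
    rw [e]; exact g.aux_zconj (-k) h
  · have h := g.gsup_dvd (x * g.Δ ^ k)
    have e : (x * g.Δ ^ k)⁻¹ * g.Δ ^ g.gsup (x * g.Δ ^ k) =
        g.Δ ^ (-k) * (x⁻¹ * g.Δ ^ (g.gsup (x * g.Δ ^ k) - k)) * g.Δ ^ (-(-k)) := by group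
    rw [e] at h
    have := g.gsup_min x _ (g.aux_zconj' (-k) h)
    omega

lemma aux_ginf_conj (k : ℤ) (x : G) : g.ginf (g.Δ ^ k * x * g.Δ ^ (-k)) = g.ginf x := by
  rw [mul_assoc, aux_ginf_zpow_mul, aux_ginf_mul_zpow]; ring

lemma aux_gsup_conj (k : ℤ) (x : G) : g.gsup (g.Δ ^ k * x * g.Δ ^ (-k)) = g.gsup x := by
  rw [mul_assoc, aux_gsup_zpow_mul, aux_gsup_mul_zpow]; ring

lemma aux_ginf_inv (x : G) : g.ginf x⁻¹ = -g.gsup x := by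
  apply le_antisymm
  · have h := g.ginf_dvd x⁻¹
    have e : (g.Δ ^ g.ginf x⁻¹)⁻¹ * x⁻¹ =
        g.Δ ^ (-g.ginf x⁻¹) * (x⁻¹ * g.Δ ^ (-g.ginf x⁻¹)) * g.Δ ^ (-(-g.ginf x⁻¹)) := by group
    rw [e] at h
    have := g.gsup_min x _ (g.aux_zconj' (-g.ginf x⁻¹) h)
    omega
  · apply g.ginf_max
    have h := g.aux_zconj (g.gsup x) (g.gsup_dvd x)
    have e : g.Δ ^ g.gsup x * (x⁻¹ * g.Δ ^ g.gsup x) * g.Δ ^ (-g.gsup x) =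
        (g.Δ ^ (-g.gsup x))⁻¹ * x⁻¹ := by group
    rwa [e] at h

lemma aux_gsup_inv (x : G) : g.gsup x⁻¹ = -g.ginf x := by
  have := g.aux_ginf_inv x⁻¹
  rw [inv_inv] at this
  omega

lemma aux_ginf_le_gsup (x : G) : g.ginf x ≤ g.gsup x := by
  have h : g.Δ ^ (g.gsup x - g.ginf x) = ((g.Δ ^ g.ginf x)⁻¹ * x) * (x⁻¹ * g.Δ ^ g.gsup x) := by
    group
  have := g.aux_zpow_nonneg (h ▸ mul_mem (g.ginf_dvd x) (g.gsup_dvd x))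
  omega

lemma aux_ginf_nonneg {x : G} (hx : x ∈ g.P) : 0 ≤ g.ginf x :=
  g.ginf_max x 0 (by simpa using hx)

lemma aux_pos_eq_one {x : G} (hx : x ∈ g.P) (h : g.gsup x ≤ 0) : x = 1 := by
  have hinv : x⁻¹ ∈ g.P := by
    have e : x⁻¹ = (x⁻¹ * g.Δ ^ g.gsup x) * g.Δ ^ (-g.gsup x) := by group
    rw [e]; exact mul_mem (g.gsup_dvd x) (g.aux_zpow_mem (by omega))
  exact g.aux_eq_one hx hinv

lemma aux_ginf_mono {x c : G} (hc : c ∈ g.P) : g.ginf x ≤ g.ginf (x * c) := by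
  apply g.ginf_max
  rw [← mul_assoc]
  exact mul_mem (g.ginf_dvd x) hc

lemma aux_gsup_mono {x c : G} (hc : c ∈ g.P) : g.gsup x ≤ g.gsup (x * c) := by
  apply g.gsup_min
  have e : x⁻¹ * g.Δ ^ g.gsup (x * c) = c * ((x * c)⁻¹ * g.Δ ^ g.gsup (x * c)) := by group
  rw [e]; exact mul_mem hc (g.gsup_dvd (x * c))

end GarsideGroup

namespace GarsideGroup

variable {G : Type*} [Group G] (g : GarsideGroup G)

/-! ### The key coprimality lemma: if `z ∧ a = 1` and `z ≼ aΔⁿ` then `z ≼ Δⁿ` -/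

lemma aux_lemB {z a : G} {n : ℤ} (hn : 0 ≤ n) (hz : z ∈ g.P) (ha : a ∈ g.P)
    (hcop : ∀ c, c ∈ g.P → c⁻¹ * z ∈ g.P → c⁻¹ * a ∈ g.P → c = 1)
    (hdvd : z⁻¹ * (a * g.Δ ^ n) ∈ g.P) : z⁻¹ * g.Δ ^ n ∈ g.P := by
  obtain ⟨K, hzK, hdK, hleast⟩ := g.llcm_exists z (g.Δ ^ n)
  have h1 : K⁻¹ * (a * g.Δ ^ n) ∈ g.P := by
    apply hleast _ hdvd
    have h := g.aux_zconj (-n) ha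
    have e : g.Δ ^ (-n) * a * g.Δ ^ (-(-n)) = (g.Δ ^ n)⁻¹ * (a * g.Δ ^ n) := by group
    rwa [e] at h
  have h2 : K⁻¹ * (z * g.Δ ^ n) ∈ g.P := by
    apply hleast
    · have e : z⁻¹ * (z * g.Δ ^ n) = g.Δ ^ n := by group
      rw [e]; exact g.aux_zpow_mem hn
    · have h := g.aux_zconj (-n) hz
      have e : g.Δ ^ (-n) * z * g.Δ ^ (-(-n)) = (g.Δ ^ n)⁻¹ * (z * g.Δ ^ n) := by group
      rwa [e] at h
  have hcP : K * (g.Δ ^ n)⁻¹ ∈ g.P := by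
    have h := g.aux_zconj n hdK
    have e : g.Δ ^ n * ((g.Δ ^ n)⁻¹ * K) * g.Δ ^ (-n) = K * (g.Δ ^ n)⁻¹ := by group
    rwa [e] at h
  have hcz : (K * (g.Δ ^ n)⁻¹)⁻¹ * z ∈ g.P := by
    have h := g.aux_zconj n h2
    have e : g.Δ ^ n * (K⁻¹ * (z * g.Δ ^ n)) * g.Δ ^ (-n) = (K * (g.Δ ^ n)⁻¹)⁻¹ * z := by group
    rwa [e] at h
  have hca : (K * (g.Δ ^ n)⁻¹)⁻¹ * a ∈ g.P := by
    have h := g.aux_zconj n h1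
    have e : g.Δ ^ n * (K⁻¹ * (a * g.Δ ^ n)) * g.Δ ^ (-n) = (K * (g.Δ ^ n)⁻¹)⁻¹ * a := by group
    rwa [e] at h
  have hc1 := hcop _ hcP hcz hca
  have hK : K = g.Δ ^ n := by
    have e : K = (K * (g.Δ ^ n)⁻¹) * g.Δ ^ n := by group
    rw [e, hc1, one_mul]
  rw [← hK]; exact hzK

/-! ### Lists of simples -/

lemma aux_prod_mem {l : List G} (h : ∀ s ∈ l, s ∈ g.P) : l.prod ∈ g.P :=
  Submonoid.list_prod_mem _ h

lemma aux_prod_simples : ∀ {l : List G}, (∀ s ∈ l, s ∈ g.P ∧ s⁻¹ * g.Δ ∈ g.P) →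
    l.prod⁻¹ * g.Δ ^ (l.length : ℤ) ∈ g.P := by
  intro l
  induction l with
  | nil => intro _; simpa using g.P.one_mem
  | cons x t ih =>
      intro h
      have hx := h x List.mem_cons_self
      have ht := ih fun s hs => h s (List.mem_cons_of_mem x hs)
      have hc := g.aux_zconj (-(t.length : ℤ)) hx.2
      have e : ((x :: t).prod)⁻¹ * g.Δ ^ (((x :: t).length : ℤ)) =
          (t.prod⁻¹ * g.Δ ^ (t.length : ℤ)) *
            (g.Δ ^ (-(t.length : ℤ)) * (x⁻¹ * g.Δ) * g.Δ ^ (-(-(t.length : ℤ)))) := by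
        rw [List.prod_cons, List.length_cons]
        push_cast
        group
      rw [e]; exact mul_mem ht hc

/-! ### Left normal forms -/

lemma aux_lnf_tail {x : G} {t : List G} (h : g.IsLNF (x :: t)) : g.IsLNF t := by
  obtain ⟨hf, hw⟩ := h
  refine ⟨fun s hs => hf s (List.mem_cons_of_mem _ hs), ?_⟩
  intro i hi c hc hd
  exact hw (i + 1) (by simpa using Nat.succ_lt_succ hi) c hc hd

lemma aux_lnf_take {l : List G} (j : ℕ) (h : g.IsLNF l) : g.IsLNF (l.take j) := by
  obtain ⟨hf, hw⟩ := h
  refine ⟨fun s hs => hf s (List.take_subset _ _ hs), ?_⟩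
  intro i hi c hc hd
  have hil : i < l.length := by
    rw [List.length_take] at hi; omega
  have hd' : g.LDvd c (l.drop i).prod := by
    have hsplit : l.drop i = (l.take j).drop i ++ l.drop j := by
      conv_lhs => rw [← List.take_append_drop j l]
      rw [List.drop_append_of_le_length]
      rw [List.length_take] at hi ⊢; omega
    rw [hsplit, List.prod_append]
    show c⁻¹ * _ ∈ g.P
    rw [← mul_assoc]
    exact mul_mem hd (g.aux_prod_mem fun s hs => (hf s (List.drop_subset _ _ hs)).1.1)
  have := hw i hil c hc hd'
  have hg : (l.take j).get ⟨i, hi⟩ = l.get ⟨i, hil⟩ := by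
    simp [List.get_eq_getElem, List.getElem_take]
  rwa [hg]

lemma aux_lnf_drop {l : List G} (n : ℕ) (h : g.IsLNF l) : g.IsLNF (l.drop n) := by
  obtain ⟨hf, hw⟩ := h
  refine ⟨fun s hs => hf s (List.drop_subset _ _ hs), ?_⟩
  intro i hi c hc hd
  have hil : n + i < l.length := by
    rw [List.length_drop] at hi; omega
  have hd' : g.LDvd c (l.drop (n + i)).prod := by
    rwa [List.drop_drop] at hd
  have := hw (n + i) hil c hc hd'
  have hg : (l.drop n).get ⟨i, hi⟩ = l.get ⟨n + i, hil⟩ := by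
    simp [List.get_eq_getElem, List.getElem_drop]
  rwa [hg]

lemma aux_length_le_of_lnf : ∀ {l : List G}, g.IsLNF l → ∀ {n : ℤ},
    l.prod⁻¹ * g.Δ ^ n ∈ g.P → (l.length : ℤ) ≤ n := by
  intro l
  induction l with
  | nil =>
      intro _ n h
      rw [List.prod_nil, inv_one, one_mul] at h
      simpa using g.aux_zpow_nonneg h
  | cons x t ih =>
      intro hlnf n hdvd
      obtain ⟨⟨hxP, hxd⟩, hx1, hxΔ⟩ := hlnf.1 x List.mem_cons_self
      have hxd : x⁻¹ * g.Δ ∈ g.P := hxd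
      have htP : t.prod ∈ g.P :=
        g.aux_prod_mem fun s hs => (hlnf.1 s (List.mem_cons_of_mem x hs)).1.1
      rw [List.prod_cons] at hdvd
      have hn1 : 1 ≤ n := by
        by_contra hcon
        have hxn : x⁻¹ * g.Δ ^ n ∈ g.P := by
          have e : x⁻¹ * g.Δ ^ n = t.prod * ((x * t.prod)⁻¹ * g.Δ ^ n) := by group
          rw [e]; exact mul_mem htP hdvd
        have hxinv : x⁻¹ ∈ g.P := by
          have e : x⁻¹ = (x⁻¹ * g.Δ ^ n) * g.Δ ^ (-n) := by group
          rw [e]; exact mul_mem hxn (g.aux_zpow_mem (by omega))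
        exact hx1 (g.aux_eq_one hxP hxinv)
      have hcop : ∀ c, c ∈ g.P → c⁻¹ * t.prod ∈ g.P → c⁻¹ * (x⁻¹ * g.Δ) ∈ g.P → c = 1 := by
        intro c hcP hct hca
        have h0 := hlnf.2 0 (by simp) (x * c) ?_ ?_
        · have h0' : (x * c)⁻¹ * x ∈ g.P := h0
          have hcinv : c⁻¹ ∈ g.P := by
            have e : c⁻¹ = (x * c)⁻¹ * x := by group
            rw [e]; exact h0'
          exact g.aux_eq_one hcP hcinv
        · show (x * c)⁻¹ * g.Δ ∈ g.P
          have e : (x * c)⁻¹ * g.Δ = c⁻¹ * (x⁻¹ * g.Δ) := by group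
          rw [e]; exact hca
        · show (x * c)⁻¹ * ((x :: t).drop 0).prod ∈ g.P
          rw [List.drop_zero, List.prod_cons]
          have e : (x * c)⁻¹ * (x * t.prod) = c⁻¹ * t.prod := by group
          rw [e]; exact hct
      have hdB : t.prod⁻¹ * ((x⁻¹ * g.Δ) * g.Δ ^ (n - 1)) ∈ g.P := by
        have e : t.prod⁻¹ * ((x⁻¹ * g.Δ) * g.Δ ^ (n - 1)) = (x * t.prod)⁻¹ * g.Δ ^ n := by
          have e2 : g.Δ * g.Δ ^ (n - 1) = g.Δ ^ n := by
            rw [← zpow_one_add]; ring_nf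
          rw [← mul_assoc, ← e2]; group
        rw [e]; exact hdvd
      have hxa : x⁻¹ * g.Δ ∈ g.P := hxd
      have hkey := g.aux_lemB (by omega : (0:ℤ) ≤ n - 1) htP hxa hcop hdB
      have := ih (g.aux_lnf_tail hlnf) hkey
      rw [List.length_cons]
      push_cast
      omega

lemma aux_gsup_lnf {l : List G} (h : g.IsLNF l) : g.gsup l.prod = (l.length : ℤ) := by
  apply le_antisymm
  · exact g.gsup_min _ _ (g.aux_prod_simples fun s hs => ⟨(h.1 s hs).1.1, (h.1 s hs).1.2⟩)
  · exact g.aux_length_le_of_lnf h (g.gsup_dvd l.prod)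

lemma aux_lnf_inf_zero {l : List G} (h : g.IsLNF l) (hne : l ≠ []) : g.ginf l.prod = 0 := by
  have hP : l.prod ∈ g.P := g.aux_prod_mem fun s hs => (h.1 s hs).1.1
  refine le_antisymm ?_ (g.aux_ginf_nonneg hP)
  by_contra hcon
  push_neg at hcon
  have hd1 : g.Δ⁻¹ * l.prod ∈ g.P := by
    have e : g.Δ⁻¹ * l.prod = g.Δ ^ (g.ginf l.prod - 1) * ((g.Δ ^ g.ginf l.prod)⁻¹ * l.prod) := by
      have e2 : g.Δ ^ (g.ginf l.prod - 1) = g.Δ⁻¹ * g.Δ ^ (g.ginf l.prod) := by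
        rw [← zpow_neg_one, ← zpow_add]; ring_nf
      rw [e2]; group
    rw [e]; exact mul_mem (g.aux_zpow_mem (by omega)) (g.ginf_dvd l.prod)
  have hlen : 0 < l.length := List.length_pos_iff.mpr hne
  have h0 := h.2 0 hlen g.Δ (by show g.Δ⁻¹ * g.Δ ∈ g.P; simpa using g.P.one_mem) ?_
  · obtain ⟨⟨hgP, hgd⟩, hg1, hgΔ⟩ := h.1 (l.get ⟨0, hlen⟩) (l.get_mem _)
    have h1 : g.Δ⁻¹ * l.get ⟨0, hlen⟩ = 1 := by
      apply g.aux_eq_one h0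
      have e : (g.Δ⁻¹ * l.get ⟨0, hlen⟩)⁻¹ = (l.get ⟨0, hlen⟩)⁻¹ * g.Δ := by group
      rw [e]; exact hgd
    exact hgΔ (inv_mul_eq_one.mp h1).symm
  · show g.Δ⁻¹ * (l.drop 0).prod ∈ g.P
    rwa [List.drop_zero]

end GarsideGroup

namespace GarsideGroup

variable {G : Type*} [Group G] (g : GarsideGroup G)

/-! ### Absorbing elements -/

lemma aux_absorbs_inv {x y : G} (h : g.Absorbs x y) : g.Absorbs (x * y) y⁻¹ := by
  obtain ⟨h1, h2⟩ := h
  constructor <;> rw [mul_inv_cancel_right]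
  · exact h1.symm
  · exact h2.symm

lemma aux_absorbs_conj (k : ℤ) {x y : G} (h : g.Absorbs x y) :
    g.Absorbs (g.Δ ^ k * x * g.Δ ^ (-k)) (g.Δ ^ k * y * g.Δ ^ (-k)) := by
  obtain ⟨h1, h2⟩ := h
  have e : (g.Δ ^ k * x * g.Δ ^ (-k)) * (g.Δ ^ k * y * g.Δ ^ (-k)) =
      g.Δ ^ k * (x * y) * g.Δ ^ (-k) := by group
  constructor
  · rw [e, g.aux_ginf_conj, g.aux_ginf_conj, h1]
  · rw [e, g.aux_gsup_conj, g.aux_gsup_conj, h2]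

lemma aux_absorbs_squeeze {x A Z B : G} (hA : A ∈ g.P) (hZ : Z ∈ g.P) (hB : B ∈ g.P)
    (h : g.Absorbs x (A * Z * B)) : g.Absorbs (x * A) Z := by
  obtain ⟨h1, h2⟩ := h
  have e : x * (A * Z * B) = ((x * A) * Z) * B := by group
  rw [e] at h1 h2
  have i1 : g.ginf (x * A) ≤ g.ginf (x * A * Z) := g.aux_ginf_mono hZ
  have i2 : g.ginf (x * A * Z) ≤ g.ginf (x * A * Z * B) := g.aux_ginf_mono hB
  have i3 : g.ginf x ≤ g.ginf (x * A) := g.aux_ginf_mono hA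
  have j1 : g.gsup (x * A) ≤ g.gsup (x * A * Z) := g.aux_gsup_mono hZ
  have j2 : g.gsup (x * A * Z) ≤ g.gsup (x * A * Z * B) := g.aux_gsup_mono hB
  have j3 : g.gsup x ≤ g.gsup (x * A) := g.aux_gsup_mono hA
  exact ⟨by omega, by omega⟩

/-! ### Vertices and cosets -/

lemma aux_vtx_mul_zpow (a : G) (k : ℤ) : g.vtx (a * g.Δ ^ k) = g.vtx a := by
  show QuotientGroup.mk _ = QuotientGroup.mk _
  rw [QuotientGroup.eq]
  refine Subgroup.mem_zpowers_iff.mpr ⟨-k, ?_⟩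
  group

lemma aux_vtx_shift {a b : G} (h : g.vtx a = g.vtx b) (c : G) : g.vtx (c * a) = g.vtx (c * b) := by
  show QuotientGroup.mk _ = QuotientGroup.mk _
  rw [QuotientGroup.eq]
  have h2 : a⁻¹ * b ∈ Subgroup.zpowers g.Δ := by
    rw [← QuotientGroup.eq]; exact h
  have e : (c * a)⁻¹ * (c * b) = a⁻¹ * b := by group
  rw [e]; exact h2

lemma aux_exists_rep (a : G) : ∃ t : ℤ, g.rep (g.vtx a) = a * g.Δ ^ t := by
  have h : (QuotientGroup.mk a : Vertex g) = QuotientGroup.mk (g.rep (g.vtx a)) :=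
    (g.rep_mem (g.vtx a)).symm
  rw [QuotientGroup.eq] at h
  obtain ⟨t, ht⟩ := Subgroup.mem_zpowers_iff.mp h
  refine ⟨t, ?_⟩
  rw [ht]; group

lemma aux_relRep_eq {v w : Vertex g} {s : G} (h0 : g.ginf s = 0)
    (hmk : g.vtx s = g.vtx ((g.rep v)⁻¹ * g.rep w)) : g.relRep v w = s := by
  unfold relRep
  rw [← hmk]
  exact g.rep_eq s h0

end GarsideGroup

namespace GarsideGroup

variable {G : Type*} [Group G] (g : GarsideGroup G)

/-- in the "simple edge" case, the preferred path has a single edge -/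
lemma aux_simple_case {v w : Vertex g} {l : List G} (hlnf : g.IsLNF l)
    (hprod : l.prod = g.relRep v w) {s : G} (hsP : s ∈ g.P) (hsd : s⁻¹ * g.Δ ∈ g.P)
    (hs1 : s ≠ 1) (hsΔ : s ≠ g.Δ)
    (hmk : g.vtx s = g.vtx ((g.rep v)⁻¹ * g.rep w)) :
    l.length = 1 ∧ l.prod = s := by
  have hinf : g.ginf s = 0 := by
    refine le_antisymm ?_ (g.aux_ginf_nonneg hsP)
    by_contra hcon
    push_neg at hcon
    have hd1 : g.Δ⁻¹ * s ∈ g.P := by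
      have e : g.Δ⁻¹ * s = g.Δ ^ (g.ginf s - 1) * ((g.Δ ^ g.ginf s)⁻¹ * s) := by
        have e2 : g.Δ ^ (g.ginf s - 1) = g.Δ⁻¹ * g.Δ ^ g.ginf s := by
          rw [← zpow_neg_one, ← zpow_add]; ring_nf
        rw [e2]; group
      rw [e]; exact mul_mem (g.aux_zpow_mem (by omega)) (g.ginf_dvd s)
    have h1 : g.Δ⁻¹ * s = 1 := by
      apply g.aux_eq_one hd1
      have e : (g.Δ⁻¹ * s)⁻¹ = s⁻¹ * g.Δ := by group
      rw [e]; exact hsd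
    exact hsΔ (inv_mul_eq_one.mp h1).symm
  have hps : l.prod = s := by rw [hprod]; exact g.aux_relRep_eq hinf hmk
  have hsup : g.gsup s = 1 := by
    have hle : g.gsup s ≤ 1 := g.gsup_min s 1 (by rw [zpow_one]; exact hsd)
    have hge : ¬ g.gsup s ≤ 0 := fun h => hs1 (g.aux_pos_eq_one hsP h)
    omega
  have hlen := g.aux_gsup_lnf hlnf
  rw [hps, hsup] at hlen
  have : l.length = 1 := by exact_mod_cast hlen.symm
  exact ⟨this, hps⟩

/-- in the "absorbable edge" case, any two path vertices are joined by a step -/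
lemma aux_core_abs {v w : Vertex g} {l : List G} (hlnf : g.IsLNF l)
    (hprod : l.prod = g.relRep v w) {y0 x0 : G}
    (habs : g.Absorbs x0 y0) (hsgn : g.ginf y0 = 0 ∨ g.gsup y0 = 0)
    (hmk : g.vtx y0 = g.vtx ((g.rep v)⁻¹ * g.rep w))
    {i j : ℕ} (hij : i < j) (hjl : j ≤ l.length) :
    g.Step (g.vtx (g.rep v * (l.take i).prod)) (g.vtx (g.rep v * (l.take j).prod)) ∨
    g.Step (g.vtx (g.rep v * (l.take j).prod)) (g.vtx (g.rep v * (l.take i).prod)) := by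
  have hfact := hlnf.1
  set La := (l.take i).prod with hLa
  set Zs := ((l.take j).drop i).prod with hZs
  set Lb := (l.drop j).prod with hLb
  have hLaP : La ∈ g.P := g.aux_prod_mem fun s hs => (hfact s (List.take_subset _ _ hs)).1.1
  have hZsP : Zs ∈ g.P := g.aux_prod_mem fun s hs =>
    (hfact s (List.take_subset _ _ (List.drop_subset _ _ hs))).1.1
  have hLbP : Lb ∈ g.P := g.aux_prod_mem fun s hs => (hfact s (List.drop_subset _ _ hs)).1.1
  have hsplit1 : La * Zs = (l.take j).prod := by
    rw [hLa, hZs, ← List.prod_append]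
    congr 1
    conv_rhs => rw [← List.take_append_drop i (l.take j)]
    rw [List.take_take, min_eq_left hij.le]
  have hsplit2 : (l.take j).prod * Lb = l.prod := by
    rw [hLb, ← List.prod_append, List.take_append_drop]
  have hprodsplit : l.prod = La * Zs * Lb := by rw [hsplit1, hsplit2]
  have hlen_seg : ((l.take j).drop i).length = j - i := by
    rw [List.length_drop, List.length_take]; omega
  have hsegLNF : g.IsLNF ((l.take j).drop i) := g.aux_lnf_drop i (g.aux_lnf_take j hlnf)
  have hZs_sup : g.gsup Zs = (j : ℤ) - (i : ℤ) := by
    have := g.aux_gsup_lnf hsegLNF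
    rw [hlen_seg] at this
    rw [hZs, this]
    omega
  have hZs_inf : g.ginf Zs = 0 := by
    rw [hZs]
    apply g.aux_lnf_inf_zero hsegLNF
    intro hnil
    have : ((l.take j).drop i).length = 0 := by rw [hnil]; rfl
    omega
  have hZs_dvd : Zs⁻¹ * g.Δ ^ ((j : ℤ) - (i : ℤ)) ∈ g.P := by
    have h := g.gsup_dvd Zs; rwa [hZs_sup] at h
  have hLa_dvd : La⁻¹ * g.Δ ^ ((i : ℤ)) ∈ g.P := by
    have h := g.aux_prod_simples (l := l.take i) fun s hs =>
      ⟨(hfact s (List.take_subset _ _ hs)).1.1, (hfact s (List.take_subset _ _ hs)).1.2⟩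
    have hlt : (l.take i).length = i := by rw [List.length_take]; omega
    rwa [hlt] at h
  have hLb_dvd : Lb⁻¹ * g.Δ ^ ((l.length : ℤ) - (j : ℤ)) ∈ g.P := by
    have h := g.aux_prod_simples (l := l.drop j) fun s hs =>
      ⟨(hfact s (List.drop_subset _ _ hs)).1.1, (hfact s (List.drop_subset _ _ hs)).1.2⟩
    have hlt : ((l.drop j).length : ℤ) = (l.length : ℤ) - (j : ℤ) := by
      rw [List.length_drop]; omega
    rwa [hlt] at h
  have hbar : l.prod = y0 * g.Δ ^ (-(g.ginf y0)) := by
    rw [hprod]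
    refine g.aux_relRep_eq ?_ ?_
    · rw [g.aux_ginf_mul_zpow]; omega
    · rw [g.aux_vtx_mul_zpow]; exact hmk
  rcases hsgn with h0 | h0
  · -- inf y0 = 0 : the normal form is y0 itself
    have hbar' : l.prod = y0 := by rw [hbar, h0]; simp
    have habs' : g.Absorbs x0 (La * Zs * Lb) := by
      rw [← hprodsplit, hbar']; exact habs
    have hsq := g.aux_absorbs_squeeze hLaP hZsP hLbP habs'
    obtain ⟨t, ht⟩ := g.aux_exists_rep (g.rep v * La)
    left; right
    refine ⟨g.Δ ^ (-t) * Zs * g.Δ ^ (-(-t)), ⟨⟨Or.inl ?_, ?_⟩, ?_⟩⟩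
    · rw [g.aux_ginf_conj]; exact hZs_inf
    · exact ⟨_, g.aux_absorbs_conj (-t) hsq⟩
    · rw [ht]
      have e : g.rep v * La * g.Δ ^ t * (g.Δ ^ (-t) * Zs * g.Δ ^ (-(-t))) =
          g.rep v * (La * Zs) * g.Δ ^ t := by group
      rw [e, hsplit1]
      exact g.aux_vtx_mul_zpow _ _
  · -- sup y0 = 0 : y0 = x̄ Δ^{-r}
    have hr : -(g.ginf y0) = (l.length : ℤ) := by
      have h1 := g.aux_gsup_lnf hlnf
      have h2 : g.gsup l.prod = -(g.ginf y0) := by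
        rw [hbar, g.aux_gsup_mul_zpow, h0]; ring
      omega
    have hY : y0⁻¹ = g.Δ ^ ((l.length : ℤ)) * l.prod⁻¹ := by
      have e : y0⁻¹ = g.Δ ^ (-(g.ginf y0)) * l.prod⁻¹ := by rw [hbar]; group
      rwa [hr] at e
    have hA'P : g.Δ ^ ((l.length : ℤ)) * Lb⁻¹ * g.Δ ^ (-(j : ℤ)) ∈ g.P := by
      have h := g.aux_sandwich hLb_dvd ((l.length : ℤ))
      have e : (l.length : ℤ) - (j : ℤ) - (l.length : ℤ) = -(j : ℤ) := by ring
      rwa [e] at h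
    have hZ'P : g.Δ ^ ((j : ℤ)) * Zs⁻¹ * g.Δ ^ (-(i : ℤ)) ∈ g.P := by
      have h := g.aux_sandwich hZs_dvd ((j : ℤ))
      have e : (j : ℤ) - (i : ℤ) - (j : ℤ) = -(i : ℤ) := by ring
      rwa [e] at h
    have hB'P : g.Δ ^ ((i : ℤ)) * La⁻¹ ∈ g.P := by
      have h := g.aux_sandwich hLa_dvd ((i : ℤ))
      have e : (i : ℤ) - (i : ℤ) = 0 := by ring
      rw [e] at h
      rwa [zpow_zero, mul_one] at h
    have hdecomp : y0⁻¹ = (g.Δ ^ ((l.length : ℤ)) * Lb⁻¹ * g.Δ ^ (-(j : ℤ))) *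
        (g.Δ ^ ((j : ℤ)) * Zs⁻¹ * g.Δ ^ (-(i : ℤ))) * (g.Δ ^ ((i : ℤ)) * La⁻¹) := by
      rw [hY, hprodsplit]; group
    have habs2 : g.Absorbs (x0 * y0) ((g.Δ ^ ((l.length : ℤ)) * Lb⁻¹ * g.Δ ^ (-(j : ℤ))) *
        (g.Δ ^ ((j : ℤ)) * Zs⁻¹ * g.Δ ^ (-(i : ℤ))) * (g.Δ ^ ((i : ℤ)) * La⁻¹)) := by
      rw [← hdecomp]; exact g.aux_absorbs_inv habs
    have hsq := g.aux_absorbs_squeeze hA'P hZ'P hB'P habs2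
    obtain ⟨t, ht⟩ := g.aux_exists_rep (g.rep v * (l.take j).prod)
    right; right
    refine ⟨g.Δ ^ (-t - (j : ℤ)) * (g.Δ ^ ((j : ℤ)) * Zs⁻¹ * g.Δ ^ (-(i : ℤ))) *
        g.Δ ^ (-(-t - (j : ℤ))), ⟨⟨Or.inl ?_, ?_⟩, ?_⟩⟩
    · rw [g.aux_ginf_conj, mul_assoc, g.aux_ginf_zpow_mul, g.aux_ginf_mul_zpow,
        g.aux_ginf_inv, hZs_sup]
      ring
    · exact ⟨_, g.aux_absorbs_conj (-t - (j : ℤ)) hsq⟩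
    · rw [ht]
      have e : g.rep v * (l.take j).prod * g.Δ ^ t *
          (g.Δ ^ (-t - (j : ℤ)) * (g.Δ ^ ((j : ℤ)) * Zs⁻¹ * g.Δ ^ (-(i : ℤ))) *
            g.Δ ^ (-(-t - (j : ℤ)))) =
          g.rep v * ((l.take j).prod * Zs⁻¹) * g.Δ ^ ((j : ℤ) - (i : ℤ) + t) := by group
      rw [e]
      have e2 : (l.take j).prod * Zs⁻¹ = La := by rw [← hsplit1]; group
      rw [e2]
      exact g.aux_vtx_mul_zpow _ _

end GarsideGroup

/-- Lemma 2.13: if `d_AL(v,w) = 1` then the preferred path `A(v,w)` has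
diameter `1` in `C_AL(G)`: any two distinct vertices visited by it are at distance
exactly `1`. -/
theorem GarsideGroup.prefPath_diameter_one {G : Type*} [Group G] (g : GarsideGroup G)
    (v w : GarsideGroup.Vertex g) (l : List G) (hl : g.IsPrefPath v w l)
    (hvw : g.dAL v w = 1) :
    ∀ p ∈ g.pathVertices v l, ∀ q ∈ g.pathVertices v l, p ≠ q → g.dAL p q = 1 := by
  obtain ⟨hlnf, hprod⟩ := hl
  have hadj : (g.calGraph).Adj v w := by
    have h : (g.calGraph).dist v w = 1 := hvw
    exact SimpleGraph.dist_eq_one_iff_adj.mp h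
  obtain ⟨hnvw, hsteps⟩ : v ≠ w ∧ (g.Step v w ∨ g.Step w v) := hadj
  have hp0 : g.vtx (g.rep v * (l.take 0).prod) = v := by
    simp only [List.take_zero, List.prod_nil, mul_one]
    exact g.rep_mem v
  have core : ∀ i j : ℕ, i < j → j ≤ l.length →
      g.Step (g.vtx (g.rep v * (l.take i).prod)) (g.vtx (g.rep v * (l.take j).prod)) ∨
      g.Step (g.vtx (g.rep v * (l.take j).prod)) (g.vtx (g.rep v * (l.take i).prod)) := by
    intro i j hij hjl
    have finish_simple : ∀ s : G, s ∈ g.P → s⁻¹ * g.Δ ∈ g.P → s ≠ 1 → s ≠ g.Δ →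
        g.vtx s = g.vtx ((g.rep v)⁻¹ * g.rep w) →
        (g.Step (g.vtx (g.rep v * (l.take i).prod)) (g.vtx (g.rep v * (l.take j).prod)) ∨
         g.Step (g.vtx (g.rep v * (l.take j).prod)) (g.vtx (g.rep v * (l.take i).prod))) := by
      intro s hsP hsd hs1 hsΔ hmk
      obtain ⟨hlen1, hps⟩ := g.aux_simple_case hlnf hprod hsP hsd hs1 hsΔ hmk
      have hi0 : i = 0 := by omega
      have hj1 : j = 1 := by omega
      subst hi0; subst hj1
      have hpv1 : g.vtx (g.rep v * (l.take 1).prod) = w := by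
        have htk : l.take 1 = l := by rw [← hlen1]; exact List.take_length (l := l)
        rw [htk]
        have h2 := g.aux_vtx_shift hmk (g.rep v)
        have e : g.rep v * ((g.rep v)⁻¹ * g.rep w) = g.rep w := by group
        rw [e] at h2
        rw [hps, h2]
        exact g.rep_mem w
      rw [hp0, hpv1]
      exact hsteps
    rcases hsteps with hstep | hstep
    · rcases hstep with ⟨m, ⟨hmP, hmd⟩, hm1, hmΔ, hvtx⟩ | ⟨y, ⟨hsgn, x, habs⟩, hvtx⟩
      · -- an edge from v to w labelled by a simple element
        have hmd' : m⁻¹ * g.Δ ∈ g.P := hmd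
        have h1 : g.vtx (g.rep v * m) = g.vtx (g.rep w) := by
          rw [hvtx]; exact (g.rep_mem w).symm
        have h2 := g.aux_vtx_shift h1 (g.rep v)⁻¹
        have e : (g.rep v)⁻¹ * (g.rep v * m) = m := by group
        rw [e] at h2
        exact finish_simple m hmP hmd' hm1 hmΔ h2
      · -- an edge from v to w labelled by an absorbable element
        have h1 : g.vtx (g.rep v * y) = g.vtx (g.rep w) := by
          rw [hvtx]; exact (g.rep_mem w).symm
        have h2 := g.aux_vtx_shift h1 (g.rep v)⁻¹
        have e : (g.rep v)⁻¹ * (g.rep v * y) = y := by group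
        rw [e] at h2
        exact g.aux_core_abs hlnf hprod habs hsgn h2 hij hjl
    · rcases hstep with ⟨m, ⟨hmP, hmd⟩, hm1, hmΔ, hvtx⟩ | ⟨y, ⟨hsgn, x, habs⟩, hvtx⟩
      · -- an edge from w to v labelled by a simple element
        have hmd' : m⁻¹ * g.Δ ∈ g.P := hmd
        have h1 : (QuotientGroup.mk (g.rep w * m) : GarsideGroup.Vertex g) =
            QuotientGroup.mk (g.rep v) := by
          rw [show (QuotientGroup.mk (g.rep w * m) : GarsideGroup.Vertex g) =
            g.vtx (g.rep w * m) from rfl, hvtx]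
          exact (g.rep_mem v).symm
        rw [QuotientGroup.eq] at h1
        obtain ⟨c, hc⟩ := Subgroup.mem_zpowers_iff.mp h1
        have e0 : g.rep v = g.rep w * m * g.Δ ^ c := by rw [hc]; group
        have e1 : (g.rep v)⁻¹ * g.rep w = g.Δ ^ (-c) * m⁻¹ := by rw [e0]; group
        have econj : ∀ u : G, g.Δ ^ c * (g.Δ ^ (-c) * u * g.Δ ^ (-(-c))) * g.Δ ^ (-c) = u := by
          intro u; group
        refine finish_simple (g.Δ ^ (-c) * (m⁻¹ * g.Δ) * g.Δ ^ (-(-c)))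
          (g.aux_zconj (-c) hmd') ?_ ?_ ?_ ?_
        · -- s⁻¹ * Δ ∈ P
          have h3 := g.aux_zconj (-c - 1) hmP
          have e : g.Δ ^ (-c - 1) * m * g.Δ ^ (-(-c - 1)) =
              (g.Δ ^ (-c) * (m⁻¹ * g.Δ) * g.Δ ^ (-(-c)))⁻¹ * g.Δ := by group
          rwa [e] at h3
        · -- s ≠ 1
          intro h
          have h2 : m⁻¹ * g.Δ = 1 := by
            have e := econj (m⁻¹ * g.Δ)
            rw [h] at e
            rw [← e]; group
          exact hmΔ (inv_mul_eq_one.mp h2)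
        · -- s ≠ Δ
          intro h
          have h2 : m⁻¹ * g.Δ = g.Δ := by
            have e := econj (m⁻¹ * g.Δ)
            rw [h] at e
            rw [← e]; group
          have h3 : m⁻¹ = 1 := mul_right_cancel (h2.trans (one_mul g.Δ).symm)
          exact hm1 (inv_eq_one.mp h3)
        · -- the coset
          rw [e1]
          have e3 : g.Δ ^ (-c) * (m⁻¹ * g.Δ) * g.Δ ^ (-(-c)) =
              (g.Δ ^ (-c) * m⁻¹) * g.Δ ^ (c + 1) := by group
          rw [e3]
          exact g.aux_vtx_mul_zpow _ _
      · -- an edge from w to v labelled by an absorbable element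
        have h1 : (QuotientGroup.mk (g.rep w * y) : GarsideGroup.Vertex g) =
            QuotientGroup.mk (g.rep v) := by
          rw [show (QuotientGroup.mk (g.rep w * y) : GarsideGroup.Vertex g) =
            g.vtx (g.rep w * y) from rfl, hvtx]
          exact (g.rep_mem v).symm
        rw [QuotientGroup.eq] at h1
        obtain ⟨c, hc⟩ := Subgroup.mem_zpowers_iff.mp h1
        have e0 : g.rep v = g.rep w * y * g.Δ ^ c := by rw [hc]; group
        have e1 : (g.rep v)⁻¹ * g.rep w = g.Δ ^ (-c) * y⁻¹ := by rw [e0]; group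
        have habs0 := g.aux_absorbs_conj (-c) (g.aux_absorbs_inv habs)
        have hsgn0 : g.ginf (g.Δ ^ (-c) * y⁻¹ * g.Δ ^ (-(-c))) = 0 ∨
            g.gsup (g.Δ ^ (-c) * y⁻¹ * g.Δ ^ (-(-c))) = 0 := by
          rcases hsgn with h | h
          · right; rw [g.aux_gsup_conj, g.aux_gsup_inv, h]; ring
          · left; rw [g.aux_ginf_conj, g.aux_ginf_inv, h]; ring
        have hmk0 : g.vtx (g.Δ ^ (-c) * y⁻¹ * g.Δ ^ (-(-c))) =
            g.vtx ((g.rep v)⁻¹ * g.rep w) := by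
          rw [e1]
          have e3 : g.Δ ^ (-c) * y⁻¹ * g.Δ ^ (-(-c)) = (g.Δ ^ (-c) * y⁻¹) * g.Δ ^ c := by group
          rw [e3]
          exact g.aux_vtx_mul_zpow _ _
        exact g.aux_core_abs hlnf hprod habs0 hsgn0 hmk0 hij hjl
  intro p hp q hq hne
  simp only [GarsideGroup.pathVertices, List.mem_map, List.mem_range] at hp hq
  obtain ⟨i, hi, rfl⟩ := hp
  obtain ⟨j, hj, rfl⟩ := hq
  show (g.calGraph).dist _ _ = 1
  rcases Nat.lt_trichotomy i j with h | h | h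
  · refine SimpleGraph.dist_eq_one_iff_adj.mpr ⟨hne, ?_⟩
    exact core i j h (by omega)
  · exact absurd (by rw [h]) hne
  · refine SimpleGraph.dist_eq_one_iff_adj.mpr ⟨hne, ?_⟩
    exact (core j i h (by omega)).symm
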